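/- arXiv:1605.08018 — 4 statements merged into one kernel-verified Lean document; each statement's English description precedes it below -/
import Mathlib

section
/- The full subcategory of S-contramodule R-modules is closed under kernels, extensions, and arbitrary products in the category of R-modules. In particular, for any morphism f : C → D of S-contramodule R-modules, the kernel of f is an S-contramodule. -/
open CategoryTheory

/-- `Ext^n_R(M, N)` for `R`-modules `M`, `N`. -/
noncomputable def extGroup (R : Type) [CommRing R] (M N : Type) [AddCommGroup M] [Module R M]
    [AddCommGroup N] [Module R N] (n : ℕ) : Type :=
  ((Ext R (ModuleCat R) n).obj (Opposite.op (ModuleCat.of R M))).obj (ModuleCat.of R N)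

/-- An `R`-module `C` is an S-contramodule if `Hom_R(S⁻¹R, C) = 0 = Ext^1_R(S⁻¹R, C)`. -/
def IsSContramodule (R : Type) [CommRing R] (S : Submonoid R)
    (C : Type) [AddCommGroup C] [Module R C] : Prop :=
  (∀ f : Localization S →ₗ[R] C, f = 0) ∧
    Subsingleton (extGroup R (Localization S) C 1)

/-!
Fix a projective resolution `Q₂ → Q₁ → Q₀ → S⁻¹R`. Then `Hom(S⁻¹R, N) = 0` and
`Ext¹(S⁻¹R, N) = 0` say that the complex `Hom(Q_•, N)` is exact in degrees 0 and 1: every map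
`Q₀ → N` vanishing on the image of `Q₁` is zero, and every map `Q₁ → N` vanishing on the image
of `Q₂` extends along `Q₁ → Q₀`. Both conditions pass to products componentwise and to kernels
by restricting codomains (the degree-0 condition on the target puts the extension inside the
kernel). For an extension `0 → C' → C → C'' → 0`, the extension found in `C''` lifts to `C` by
projectivity of `Q₀`, and the error of that lift factors through `C'`.
-/

open LinearMap

section Precomp

variable {R : Type*} [Ring R] {Q₀ Q₁ Q₂ : Type*} [AddCommGroup Q₀] [Module R Q₀]
  [AddCommGroup Q₁] [Module R Q₁] [AddCommGroup Q₂] [Module R Q₂]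

def PrecompInjective (d : Q₁ →ₗ[R] Q₀) (N : Type*) [AddCommGroup N] [Module R N] : Prop :=
  ∀ f : Q₀ →ₗ[R] N, f ∘ₗ d = 0 → f = 0

def PrecompExact (d₁ : Q₁ →ₗ[R] Q₀) (d₂ : Q₂ →ₗ[R] Q₁) (N : Type*) [AddCommGroup N]
    [Module R N] : Prop :=
  ∀ g : Q₁ →ₗ[R] N, g ∘ₗ d₂ = 0 → ∃ h : Q₀ →ₗ[R] N, h ∘ₗ d₁ = g

variable {d₁ : Q₁ →ₗ[R] Q₀} {d₂ : Q₂ →ₗ[R] Q₁}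
  {C' C C'' : Type*} [AddCommGroup C'] [Module R C'] [AddCommGroup C] [Module R C]
  [AddCommGroup C''] [Module R C'']

theorem PrecompInjective.ker (hC : PrecompInjective d₁ C) (f : C →ₗ[R] C'') :
    PrecompInjective d₁ (LinearMap.ker f) := by
  intro g hg
  have hg' : (LinearMap.ker f).subtype ∘ₗ g = 0 := hC _ (by rw [comp_assoc, hg, comp_zero])
  exact ext fun x => Subtype.ext (LinearMap.congr_fun hg' x)

theorem PrecompExact.ker (hC : PrecompExact d₁ d₂ C) (hC'' : PrecompInjective d₁ C'')
    (f : C →ₗ[R] C'') : PrecompExact d₁ d₂ (LinearMap.ker f) := by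
  intro g hg
  obtain ⟨h, hh⟩ := hC ((LinearMap.ker f).subtype ∘ₗ g) (by rw [comp_assoc, hg, comp_zero])
  have hfh : f ∘ₗ h = 0 :=
    hC'' _ (by rw [comp_assoc, hh, ← comp_assoc, comp_ker_subtype, zero_comp])
  exact ⟨h.codRestrict _ fun x => LinearMap.congr_fun hfh x,
    ext fun x => Subtype.ext (LinearMap.congr_fun hh x)⟩

theorem Function.Exact.exists_comp_eq_of_comp_eq_zero {i : C' →ₗ[R] C} {p : C →ₗ[R] C''}
    (hip : Function.Exact i p) (hi : Function.Injective i) {M : Type*} [AddCommGroup M]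
    [Module R M] {f : M →ₗ[R] C} (hf : p ∘ₗ f = 0) : ∃ g : M →ₗ[R] C', i ∘ₗ g = f := by
  have hmem (x : M) : f x ∈ range i := mem_range.mpr ((hip (f x)).mp (LinearMap.congr_fun hf x))
  exact ⟨(LinearEquiv.ofInjective i hi).symm ∘ₗ f.codRestrict _ hmem, by ext; simp⟩

theorem PrecompInjective.of_exact {i : C' →ₗ[R] C} {p : C →ₗ[R] C''} (hip : Function.Exact i p)
    (hi : Function.Injective i) (hC' : PrecompInjective d₁ C') (hC'' : PrecompInjective d₁ C'') :
    PrecompInjective d₁ C := by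
  intro f hf
  obtain ⟨g, rfl⟩ := hip.exists_comp_eq_of_comp_eq_zero hi
    (hC'' (p ∘ₗ f) (by rw [comp_assoc, hf, comp_zero]))
  have hg : g ∘ₗ d₁ = 0 := (cancel_left hi).mp (by rw [← comp_assoc, hf, comp_zero])
  rw [hC' g hg, comp_zero]

theorem PrecompExact.of_exact [Module.Projective R Q₀] (hd : d₁ ∘ₗ d₂ = 0)
    {i : C' →ₗ[R] C} {p : C →ₗ[R] C''} (hip : Function.Exact i p)
    (hi : Function.Injective i) (hp : Function.Surjective p)
    (hC' : PrecompExact d₁ d₂ C') (hC'' : PrecompExact d₁ d₂ C'') : PrecompExact d₁ d₂ C := by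
  intro g hg
  obtain ⟨h, hh⟩ := hC'' (p ∘ₗ g) (by rw [comp_assoc, hg, comp_zero])
  obtain ⟨k, hk⟩ := Module.projective_lifting_property p h hp
  obtain ⟨g', hg'⟩ := hip.exists_comp_eq_of_comp_eq_zero hi (f := g - k ∘ₗ d₁)
    (by rw [comp_sub, ← comp_assoc, hk, hh, sub_self])
  have hg'd : g' ∘ₗ d₂ = 0 := (cancel_left hi).mp <| by
    rw [← comp_assoc, hg', sub_comp, hg, comp_assoc, hd, comp_zero, comp_zero, sub_self]
  obtain ⟨h', hh'⟩ := hC' g' hg'd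
  exact ⟨k + i ∘ₗ h', by rw [add_comp, comp_assoc, hh', hg', add_sub_cancel]⟩

variable {ι : Type*} {M : ι → Type*} [∀ j, AddCommGroup (M j)] [∀ j, Module R (M j)]

theorem PrecompInjective.pi (hM : ∀ j, PrecompInjective d₁ (M j)) :
    PrecompInjective d₁ (∀ j, M j) := by
  intro f hf
  refine ext fun x => funext fun j => LinearMap.congr_fun (hM j (proj j ∘ₗ f) ?_) x
  rw [comp_assoc, hf, comp_zero]

theorem PrecompExact.pi (hM : ∀ j, PrecompExact d₁ d₂ (M j)) :
    PrecompExact d₁ d₂ (∀ j, M j) := by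
  intro g hg
  choose h hh using fun j => hM j (proj j ∘ₗ g) (by rw [comp_assoc, hg, comp_zero])
  exact ⟨LinearMap.pi h, ext fun x => funext fun j => LinearMap.congr_fun (hh j) x⟩

theorem Function.Exact.forall_eq_zero_iff_precompInjective {L : Type*} [AddCommGroup L]
    [Module R L] {π : Q₀ →ₗ[R] L} (h : Function.Exact d₁ π) (hπ : Function.Surjective π)
    (N : Type*) [AddCommGroup N] [Module R N] :
    (∀ f : L →ₗ[R] N, f = 0) ↔ PrecompInjective d₁ N := by
  constructor
  · intro h0 f hf
    have hfd : range d₁ ≤ LinearMap.ker f := range_le_ker_iff.mpr hf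
    ext x
    simpa using LinearMap.congr_fun
      (h0 ((range d₁).liftQ f hfd ∘ₗ (h.linearEquivOfSurjective hπ).symm.toLinearMap)) (π x)
  · intro hd f
    refine (cancel_right hπ).mp ?_
    rw [zero_comp]
    exact hd _ (by rw [LinearMap.comp_assoc, h.linearMap_comp_eq_zero, comp_zero])

end Precomp

universe u

namespace CategoryTheory.ProjectiveResolution

variable {R : Type u} [CommRing R] {L : Type u} [AddCommGroup L] [Module R L]
  (P : ProjectiveResolution (ModuleCat.of R L)) (N : Type u) [AddCommGroup N] [Module R N]

theorem forall_eq_zero_iff_precompInjective :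
    (∀ f : L →ₗ[R] N, f = 0) ↔ PrecompInjective (P.complex.d 1 0).hom N := by
  have hexact : Function.Exact (P.complex.d 1 0).hom (P.π.f 0).hom :=
    (ShortComplex.ShortExact.moduleCat_exact_iff_function_exact _).mp P.exact₀
  have hπ : Function.Surjective (P.π.f 0) := by
    rw [← ModuleCat.epi_iff_surjective]; infer_instance
  exact hexact.forall_eq_zero_iff_precompInjective hπ N

theorem subsingleton_ext_one_iff :
    Subsingleton (((Ext R (ModuleCat R) 1).obj (Opposite.op (ModuleCat.of R L))).obj
      (ModuleCat.of R N)) ↔ PrecompExact (P.complex.d 1 0).hom (P.complex.d 2 1).hom N := by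
  rw [(P.isoExt 1 _).toLinearEquiv.toEquiv.subsingleton_congr,
    ← ModuleCat.isZero_iff_subsingleton, ← HomologicalComplex.exactAt_iff_isZero_homology,
    HomologicalComplex.exactAt_iff' _ 0 1 2 (by simp) (by simp), ShortComplex.moduleCat_exact_iff]
  exact ModuleCat.homEquiv.forall_congr fun g => imp_congr ModuleCat.hom_ext_iff
    (ModuleCat.homEquiv.exists_congr fun h => ModuleCat.hom_ext_iff)

end CategoryTheory.ProjectiveResolution

theorem isSContramodule_iff {R : Type} [CommRing R] {S : Submonoid R}
    (P : ProjectiveResolution (ModuleCat.of R (Localization S)))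
    (N : Type) [AddCommGroup N] [Module R N] :
    IsSContramodule R S N ↔ PrecompInjective (P.complex.d 1 0).hom N ∧
      PrecompExact (P.complex.d 1 0).hom (P.complex.d 2 1).hom N :=
  and_congr (P.forall_eq_zero_iff_precompInjective N) (P.subsingleton_ext_one_iff N)

/-- The class of S-contramodule R-modules is closed under kernels, extensions, and
arbitrary products. -/
theorem contramodules_closed_under_kernels_extensions_products
    (R : Type) [CommRing R] (S : Submonoid R) :
    -- kernels
    (∀ (C D : Type) [AddCommGroup C] [Module R C] [AddCommGroup D] [Module R D],
      IsSContramodule R S C → IsSContramodule R S D →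
      ∀ f : C →ₗ[R] D, IsSContramodule R S (LinearMap.ker f)) ∧
    -- extensions
    (∀ (C' C C'' : Type) [AddCommGroup C'] [Module R C'] [AddCommGroup C] [Module R C]
        [AddCommGroup C''] [Module R C'']
        (i : C' →ₗ[R] C) (p : C →ₗ[R] C''),
      Function.Injective i → Function.Surjective p →
      LinearMap.range i = LinearMap.ker p →
      IsSContramodule R S C' → IsSContramodule R S C'' → IsSContramodule R S C) ∧
    -- arbitrary products
    (∀ (ι : Type) (M : ι → Type) [∀ i, AddCommGroup (M i)] [∀ i, Module R (M i)],
      (∀ i, IsSContramodule R S (M i)) → IsSContramodule R S (∀ i, M i)) := by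
  obtain ⟨⟨P⟩⟩ : HasProjectiveResolution (ModuleCat.of R (Localization S)) := inferInstance
  have hP := isSContramodule_iff P
  have : Module.Projective R (P.complex.X 0) := (IsProjective.iff_projective _).mpr (P.projective 0)
  have hd : (P.complex.d 1 0).hom ∘ₗ (P.complex.d 2 1).hom = 0 :=
    congrArg ModuleCat.Hom.hom (P.complex.d_comp_d 2 1 0)
  refine ⟨fun C D _ _ _ _ hC hD f => ?_, fun C' C C'' _ _ _ _ _ _ i p hi hp hip hC' hC'' => ?_,
    fun ι M _ _ hM => ?_⟩
  · rw [hP] at hC hD ⊢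
    exact ⟨hC.1.ker f, hC.2.ker hD.1 f⟩
  · rw [hP] at hC' hC'' ⊢
    have hip : Function.Exact i p := LinearMap.exact_iff.mpr hip.symm
    exact ⟨hC'.1.of_exact hip hi hC''.1, hC'.2.of_exact hd hip hi hp hC''.2⟩
  · simp only [hP] at hM ⊢
    exact ⟨.pi fun j => (hM j).1, .pi fun j => (hM j).2⟩
end

section
/- Let b : A → B and c : A → C be R-module homomorphisms such that C is an S-contramodule, ker(b) is an S-h-divisible R-module, and coker(b) is a module over S⁻¹R. Then there exists a unique homomorphism f : B → C with c = f ∘ b. -/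
open CategoryTheory

/-- An `R`-module `C` is S-h-divisible if it is a quotient of a module over `S⁻¹R`
(equivalently, of a free `S⁻¹R`-module). -/
def IsSHDivisible (R : Type) [CommRing R] (S : Submonoid R)
    (C : Type) [AddCommGroup C] [Module R C] : Prop :=
  ∃ (ι : Type) (f : (ι →₀ Localization S) →ₗ[R] C), Function.Surjective f

/-! Because `ker b` is a quotient of `S⁻¹R`-modules and `Hom(S⁻¹R, C) = 0`, `c` kills
`ker b`, so `C` embeds into the pushout `E` of `b` and `c`, giving an extension
`0 → C → E → coker b → 0`. Every extension by `C` of a module `Q` on which `S` acts invertibly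
splits: the map `Hom(S⁻¹R, E) → Hom(S⁻¹R, Q) ≅ Q` is injective as `Hom(S⁻¹R, C) = 0` and
surjective as `Ext¹(S⁻¹R, C) = 0`. A retraction `E → C` composed with `B → E` factors `c`
through `b`, and the factorization is unique because `Hom(coker b, C) = 0`. -/

namespace CategoryTheory

open Limits

variable {R : Type*} [Ring R] {C : Type*} [Category* C] [Abelian C] [Linear R C]
  [EnoughProjectives C]

lemma ProjectiveResolution.exists_d_comp_eq_of_isZero_ext {X Y : C}
    (P : ProjectiveResolution X) (hXY : IsZero (((Ext R C 1).obj (Opposite.op X)).obj Y))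
    (φ : P.complex.X 1 ⟶ Y) (hφ : P.complex.d 2 1 ≫ φ = 0) :
    ∃ ψ : P.complex.X 0 ⟶ Y, P.complex.d 1 0 ≫ ψ = φ := by
  have hexact := ((P.complex.linearYonedaObj R Y).exactAt_iff_isZero_homology 1).2
    (hXY.of_iso (P.isoExt 1 Y).symm)
  rw [HomologicalComplex.exactAt_iff' _ 0 1 2 (by simp) (by simp),
    ShortComplex.moduleCat_exact_iff] at hexact
  exact hexact φ hφ

lemma ShortComplex.ShortExact.exists_comp_g_eq_of_isZero_ext {S : ShortComplex C}
    (hS : S.ShortExact) {X : C} (hX : IsZero (((Ext R C 1).obj (Opposite.op X)).obj S.X₁))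
    (γ : X ⟶ S.X₃) : ∃ δ : X ⟶ S.X₂, δ ≫ S.g = γ := by
  have := hS.mono_f
  have := hS.epi_g
  let P : ProjectiveResolution X := HasProjectiveResolution.out.some
  let π : P.complex.X 0 ⟶ X := P.π.f 0
  have hdπ : P.complex.d 1 0 ≫ π = 0 := P.complex_d_comp_π_f_zero
  have : Epi π := inferInstanceAs (Epi (P.π.f 0))
  obtain ⟨l, hl⟩ : ∃ l : P.complex.X 0 ⟶ S.X₂, l ≫ S.g = π ≫ γ :=
    ⟨Projective.factorThru _ _, Projective.factorThru_comp _ _⟩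
  let φ := hS.exact.lift (P.complex.d 1 0 ≫ l)
    (by rw [Category.assoc, hl, reassoc_of% hdπ, zero_comp])
  obtain ⟨ψ, hψ⟩ := P.exists_d_comp_eq_of_isZero_ext hX φ
    (by rw [← cancel_mono S.f]; simp [φ])
  let δ : X ⟶ S.X₂ := P.isColimitCokernelCofork.desc
    (CokernelCofork.ofπ (l - ψ ≫ S.f) (by simp [reassoc_of% hψ, φ]))
  have hπδ : π ≫ δ = l - ψ ≫ S.f := Cofork.IsColimit.π_desc P.isColimitCokernelCofork
  refine ⟨δ, ?_⟩
  rw [← cancel_epi π, ← Category.assoc, hπδ]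
  simp [hl]

end CategoryTheory

section Localization

variable {R M : Type*} [CommRing R] [AddCommGroup M] [Module R M] {S : Submonoid R}

lemma exists_localization_hom_apply_one_eq
    (hM : ∀ s : S, IsUnit (algebraMap R (Module.End R M) s)) (m : M) :
    ∃ φ : Localization S →ₗ[R] M, φ 1 = m :=
  ⟨IsLocalizedModule.lift S (Algebra.linearMap R (Localization S))
      (LinearMap.toSpanSingleton R M m) hM, by
    simpa using IsLocalizedModule.lift_apply S (Algebra.linearMap R (Localization S))
      (LinearMap.toSpanSingleton R M m) hM 1⟩

lemma localization_hom_ext (hM : ∀ s : S, IsUnit (algebraMap R (Module.End R M) s))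
    {φ ψ : Localization S →ₗ[R] M} (h : φ 1 = ψ 1) : φ = ψ :=
  IsLocalizedModule.ext S (Algebra.linearMap R (Localization S)) hM
    (LinearMap.ext_ring (by simpa))

end Localization

variable {R : Type} [CommRing R] {M C E X : Type} [AddCommGroup M] [Module R M]
  [AddCommGroup C] [Module R C] [AddCommGroup E] [Module R E] [AddCommGroup X] [Module R X]

lemma Function.Exact.exists_comp_eq_of_subsingleton_extGroup
    {κ : C →ₗ[R] E} {ρ : E →ₗ[R] X} (hexact : Function.Exact κ ρ)
    (hκ : Function.Injective κ) (hρ : Function.Surjective ρ)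
    (hext : Subsingleton (extGroup R M C 1)) (γ : M →ₗ[R] X) :
    ∃ δ : M →ₗ[R] E, ρ ∘ₗ δ = γ := by
  have hS : (ShortComplex.moduleCatMk κ ρ hexact.linearMap_comp_eq_zero).ShortExact :=
    { exact := (ShortComplex.ShortExact.moduleCat_exact_iff_function_exact _).2 hexact
      mono_f := (ModuleCat.mono_iff_injective _).2 hκ
      epi_g := (ModuleCat.epi_iff_surjective _).2 hρ }
  obtain ⟨δ, hδ⟩ := hS.exists_comp_g_eq_of_isZero_ext (R := R) (X := ModuleCat.of R M)
    (@ModuleCat.isZero_of_subsingleton _ _ _ hext) (ModuleCat.ofHom γ)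
  exact ⟨δ.hom, congr(ModuleCat.Hom.hom $hδ)⟩

variable {S : Submonoid R}

namespace IsSContramodule

lemma hom_eq_zero (hC : IsSContramodule R S C)
    (hM : ∀ s : S, IsUnit (algebraMap R (Module.End R M) s)) (φ : M →ₗ[R] C) : φ = 0 := by
  ext m
  obtain ⟨ψ, rfl⟩ := exists_localization_hom_apply_one_eq hM m
  exact congr($(hC.1 (φ ∘ₗ ψ)) 1)

lemma hom_eq_zero_of_isSHDivisible (hC : IsSContramodule R S C) (hM : IsSHDivisible R S M)
    (φ : M →ₗ[R] C) : φ = 0 := by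
  obtain ⟨ι, g, hg⟩ := hM
  refine (LinearMap.cancel_right hg).1 (Finsupp.lhom_ext' fun i => ?_)
  exact hC.1 _

lemma localization_hom_eq_zero_of_range_le (hC : IsSContramodule R S C) {κ : C →ₗ[R] E}
    (hκ : Function.Injective κ) (δ : Localization S →ₗ[R] E)
    (hδ : LinearMap.range δ ≤ LinearMap.range κ) : δ = 0 := by
  have h := hC.1 ((LinearEquiv.ofInjective κ hκ).symm.toLinearMap ∘ₗ
    δ.codRestrict _ fun x => hδ ⟨x, rfl⟩)
  ext x
  simpa [Subtype.ext_iff] using congr(LinearEquiv.ofInjective κ hκ ($h x))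

lemma exists_section (hC : IsSContramodule R S C) {κ : C →ₗ[R] E} {p : E →ₗ[R] X}
    (hexact : Function.Exact κ p) (hκ : Function.Injective κ) (hp : Function.Surjective p)
    (hX : ∀ s : S, IsUnit (algebraMap R (Module.End R X) s)) :
    ∃ r : X →ₗ[R] E, p ∘ₗ r = LinearMap.id := by
  let Φ : (Localization S →ₗ[R] E) →ₗ[R] X := p ∘ₗ LinearMap.applyₗ 1
  have hΦ_inj : Function.Injective Φ := by
    refine (injective_iff_map_eq_zero Φ).2 fun δ hδ => ?_
    refine hC.localization_hom_eq_zero_of_range_le hκ δ ?_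
    have hpδ : p ∘ₗ δ = 0 := localization_hom_ext hX (by simpa [Φ] using hδ)
    rintro _ ⟨x, rfl⟩
    exact (hexact _).1 congr($hpδ x)
  have hΦ_surj : Function.Surjective Φ := fun x => by
    obtain ⟨ψ, hψ⟩ := exists_localization_hom_apply_one_eq hX x
    obtain ⟨δ, hδ⟩ := hexact.exists_comp_eq_of_subsingleton_extGroup hκ hp hC.2 ψ
    exact ⟨δ, by simp [Φ, ← hψ, ← hδ]⟩
  let e := LinearEquiv.ofBijective Φ ⟨hΦ_inj, hΦ_surj⟩
  exact ⟨LinearMap.applyₗ 1 ∘ₗ e.symm.toLinearMap, LinearMap.ext e.apply_symm_apply⟩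

end IsSContramodule

section Pushout

variable {A B : Type} [AddCommGroup A] [Module R A] [AddCommGroup B] [Module R B]
  (b : A →ₗ[R] B) (c : A →ₗ[R] C)

abbrev pushout : Type := (B × C) ⧸ LinearMap.range (b.prod (-c))

def pushoutInl : B →ₗ[R] pushout b c := Submodule.mkQ _ ∘ₗ LinearMap.inl R B C

def pushoutInr : C →ₗ[R] pushout b c := Submodule.mkQ _ ∘ₗ LinearMap.inr R B C

def pushoutToCokernel : pushout b c →ₗ[R] B ⧸ LinearMap.range b :=
  Submodule.liftQ _ ((LinearMap.range b).mkQ ∘ₗ LinearMap.fst R B C) <| by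
    rintro _ ⟨a, rfl⟩
    simp

lemma pushoutInl_comp : pushoutInl b c ∘ₗ b = pushoutInr b c ∘ₗ c := by
  ext a
  simp only [pushoutInl, pushoutInr, LinearMap.comp_apply, Submodule.mkQ_apply,
    Submodule.Quotient.eq]
  exact ⟨a, by simp⟩

lemma pushoutInr_injective (h : LinearMap.ker b ≤ LinearMap.ker c) :
    Function.Injective (pushoutInr b c) := by
  refine (injective_iff_map_eq_zero _).2 fun y hy => ?_
  obtain ⟨a, ha⟩ := (Submodule.Quotient.mk_eq_zero _).1 hy
  have hb : b a = 0 := congr(Prod.fst $ha)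
  have hc : -c a = y := congr(Prod.snd $ha)
  rw [← hc, LinearMap.mem_ker.1 (h hb), neg_zero]

lemma pushoutToCokernel_surjective : Function.Surjective (pushoutToCokernel b c) := by
  rintro ⟨x⟩
  exact ⟨pushoutInl b c x, rfl⟩

lemma exact_pushoutInr_pushoutToCokernel :
    Function.Exact (pushoutInr b c) (pushoutToCokernel b c) := by
  rintro ⟨x, y⟩
  refine ⟨fun hx => ?_, ?_⟩
  · obtain ⟨a, rfl⟩ := (Submodule.Quotient.mk_eq_zero _).1 hx
    refine ⟨y + c a, (Submodule.Quotient.eq _).2 ⟨-a, ?_⟩⟩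
    simp
  · rintro ⟨y, hy⟩
    rw [← hy]
    simp [pushoutInr, pushoutToCokernel]

end Pushout

namespace IsSContramodule

variable {A B : Type} [AddCommGroup A] [Module R A] [AddCommGroup B] [Module R B]
  {b : A →ₗ[R] B}

lemma exists_comp_eq (hC : IsSContramodule R S C) {c : A →ₗ[R] C}
    (hbc : LinearMap.ker b ≤ LinearMap.ker c)
    (hb : ∀ s : S, IsUnit (algebraMap R (Module.End R (B ⧸ LinearMap.range b)) s)) :
    ∃ f : B →ₗ[R] C, f ∘ₗ b = c := by
  have hexact := exact_pushoutInr_pushoutToCokernel b c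
  have hinj := pushoutInr_injective b c hbc
  have hsurj := pushoutToCokernel_surjective b c
  obtain ⟨r, hr⟩ := ((hexact.split_tfae hinj hsurj).out 0 1).1
    (hC.exists_section hexact hinj hsurj hb)
  refine ⟨r ∘ₗ pushoutInl b c, ?_⟩
  rw [LinearMap.comp_assoc, pushoutInl_comp, ← LinearMap.comp_assoc, hr, LinearMap.id_comp]

lemma eq_of_comp_eq (hC : IsSContramodule R S C)
    (hb : ∀ s : S, IsUnit (algebraMap R (Module.End R (B ⧸ LinearMap.range b)) s))
    {f g : B →ₗ[R] C} (h : f ∘ₗ b = g ∘ₗ b) : f = g := by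
  have hfg : LinearMap.range b ≤ LinearMap.ker (f - g) := by
    rintro _ ⟨a, rfl⟩
    simpa [sub_eq_zero] using congr($h a)
  rw [← sub_eq_zero, ← Submodule.liftQ_mkQ _ _ hfg, hC.hom_eq_zero hb (Submodule.liftQ _ _ hfg),
    LinearMap.zero_comp]

end IsSContramodule

/-- If `b : A → B`, `c : A → C` with `C` an S-contramodule, `ker b` S-h-divisible, and
`coker b` a module over `S⁻¹R` (every `s ∈ S` acts bijectively on it), then there is
a unique `f : B → C` with `c = f ∘ b`. -/
theorem unique_factorization_through_contramodule
    (R : Type) [CommRing R] (S : Submonoid R)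
    (A B C : Type) [AddCommGroup A] [Module R A] [AddCommGroup B] [Module R B]
    [AddCommGroup C] [Module R C]
    (b : A →ₗ[R] B) (c : A →ₗ[R] C)
    (hC : IsSContramodule R S C)
    (hker : IsSHDivisible R S (LinearMap.ker b))
    (hcoker : ∀ s : S, Function.Bijective
      (fun x : B ⧸ LinearMap.range b => (s : R) • x)) :
    ∃! f : B →ₗ[R] C, c = f.comp b := by
  have hb : ∀ s : S, IsUnit (algebraMap R (Module.End R (B ⧸ LinearMap.range b)) s) :=
    fun s => (Module.End.isUnit_iff _).2 (hcoker s)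
  have hbc : LinearMap.ker b ≤ LinearMap.ker c := fun a ha =>
    congr($(hC.hom_eq_zero_of_isSHDivisible hker (c ∘ₗ (LinearMap.ker b).subtype)) ⟨a, ha⟩)
  obtain ⟨f, hf⟩ := hC.exists_comp_eq hbc hb
  exact ⟨f, hf.symm, fun g hg => hC.eq_of_comp_eq hb (hg.symm.trans hf.symm)⟩
end

section
/- The R-module Hom_R(M, C) is an S-contramodule whenever either M is an S-torsion R-module or C is an S-contramodule R-module. -/
/-!
Write `L = S⁻¹R` and take `0 → K → P₀ → L → 0` from a projective resolution of `L`, so that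
`Ext¹(L, D) = 0` means that every map `K → D` extends to `P₀`.

If `M` is `S`-torsion, then `M ⊗ L = 0` because `L` is `S`-divisible; hence
`Hom(L, Hom(M, C)) = Hom(M ⊗ L, C) = 0`, and since `L` is flat, `M ⊗ K → M ⊗ P₀` is an
isomorphism, so every map `M ⊗ K → C` extends to `M ⊗ P₀`.

If `C` is an `S`-contramodule, a map `K → Hom(M, C)` extends to `P₀` for each `m : M`
separately; `Hom(L, C) = 0` makes each extension unique, hence linear in `m`.
-/

open CategoryTheory

open LinearMap TensorProduct

section Factorization

variable {R : Type*} [CommRing R] {N P D : Type*} [AddCommGroup N] [Module R N]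
  [AddCommGroup P] [Module R P] [AddCommGroup D] [Module R D]

theorem LinearMap.exists_comp_eq_of_surjective {q : N →ₗ[R] P} (hq : Function.Surjective q)
    {f : N →ₗ[R] D} (h : ker q ≤ ker f) : ∃ f' : P →ₗ[R] D, f' ∘ₗ q = f :=
  ⟨(ker q).liftQ f h ∘ₗ (q.quotKerEquivOfSurjective hq).symm.toLinearMap, by ext; simp⟩

end Factorization

section Torsion

variable {R : Type*} [CommRing R] {S : Submonoid R} {M L C : Type*} [AddCommGroup M] [Module R M]
  [AddCommGroup L] [Module R L] [AddCommGroup C] [Module R C]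

theorem Localization.exists_smul_eq (s : S) (y : Localization S) :
    ∃ z : Localization S, (s : R) • z = y :=
  ⟨Localization.mk 1 s * y, by
    rw [← smul_mul_assoc, Localization.smul_mk, smul_eq_mul, mul_one, Localization.mk_self,
      one_mul]⟩

theorem TensorProduct.subsingleton_of_isTorsion' (hM : Module.IsTorsion' M S)
    (hL : ∀ (s : S) (y : L), ∃ z : L, (s : R) • z = y) : Subsingleton (M ⊗[R] L) := by
  refine subsingleton_of_forall_eq 0 fun t => t.induction_on rfl (fun m y => ?_) ?_
  · obtain ⟨s, hs⟩ := @hM m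
    obtain ⟨z, rfl⟩ := hL s y
    rw [← smul_tmul, ← Submonoid.smul_def, hs, zero_tmul]
  · rintro _ _ rfl rfl
    exact add_zero 0

theorem LinearMap.eq_zero_of_subsingleton_tensor [Subsingleton (M ⊗[R] L)]
    (φ : L →ₗ[R] M →ₗ[R] C) : φ = 0 := by
  ext y m
  exact (congrArg (lift φ.flip) (Subsingleton.elim (m ⊗ₜ y) 0)).trans (map_zero _)

end Torsion

section Extension

variable {R : Type*} [CommRing R] {P L M C : Type*} [AddCommGroup P] [Module R P]
  [AddCommGroup L] [Module R L] [AddCommGroup M] [Module R M] [AddCommGroup C] [Module R C]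
  {π : P →ₗ[R] L}

theorem exists_comp_subtype_eq_of_flat [Module.Flat R L] (hπ : Function.Surjective π)
    [Subsingleton (M ⊗[R] L)] (f : ker π →ₗ[R] M →ₗ[R] C) :
    ∃ g : P →ₗ[R] M →ₗ[R] C, g ∘ₗ (ker π).subtype = f := by
  have hinj : Function.Injective ((ker π).subtype.lTensor M) :=
    lTensor_injective_of_exact_of_flat π hπ _ (ker π).injective_subtype
      (exact_subtype_ker_map π) M
  have hsurj : Function.Surjective ((ker π).subtype.lTensor M) := fun t =>
    (lTensor_exact M (exact_subtype_ker_map π) hπ t).mp (Subsingleton.elim _ _)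
  let e := LinearEquiv.ofBijective _ ⟨hinj, hsurj⟩
  refine ⟨(curry (lift f.flip ∘ₗ e.symm.toLinearMap)).flip, ?_⟩
  ext k m
  have : e.symm (m ⊗ₜ k.1) = m ⊗ₜ k := e.symm_apply_eq.mpr rfl
  simp [this]

theorem LinearMap.ext_of_comp_subtype_ker (hπ : Function.Surjective π)
    (hC : ∀ φ : L →ₗ[R] C, φ = 0) {g g' : P →ₗ[R] C}
    (h : g ∘ₗ (ker π).subtype = g' ∘ₗ (ker π).subtype) : g = g' := by
  obtain ⟨φ, hφ⟩ := exists_comp_eq_of_surjective hπ (f := g - g') fun x hx =>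
    sub_eq_zero.mpr (LinearMap.congr_fun h ⟨x, hx⟩)
  rw [← sub_eq_zero, ← hφ, hC φ, zero_comp]

theorem exists_comp_subtype_eq_of_forall_eq_zero (hπ : Function.Surjective π)
    (hC₀ : ∀ φ : L →ₗ[R] C, φ = 0)
    (hC₁ : ∀ f : ker π →ₗ[R] C, ∃ g : P →ₗ[R] C, g ∘ₗ (ker π).subtype = f)
    (f : ker π →ₗ[R] M →ₗ[R] C) :
    ∃ g : P →ₗ[R] M →ₗ[R] C, g ∘ₗ (ker π).subtype = f := by
  choose g hg using fun m => hC₁ (f.flip m)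
  let G : M →ₗ[R] P →ₗ[R] C :=
    { toFun := g
      map_add' := fun m m' => ext_of_comp_subtype_ker hπ hC₀ <| by
        simp only [add_comp, hg, map_add]
      map_smul' := fun r m => ext_of_comp_subtype_ker hπ hC₀ <| by
        simp only [smul_comp, hg, map_smul, RingHom.id_apply] }
  exact ⟨G.flip, by ext k m; exact LinearMap.congr_fun (hg m) k⟩

end Extension

section Cocycles

variable {R : Type*} [CommRing R] {P₂ P₁ P₀ L D : Type*} [AddCommGroup P₂] [Module R P₂]
  [AddCommGroup P₁] [Module R P₁] [AddCommGroup P₀] [Module R P₀] [AddCommGroup L] [Module R L]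
  [AddCommGroup D] [Module R D] {d₂ : P₂ →ₗ[R] P₁} {d₁ : P₁ →ₗ[R] P₀} {π : P₀ →ₗ[R] L}

theorem forall_exists_comp_eq_iff_of_exact (h₂₁ : Function.Exact d₂ d₁)
    (h₁₀ : Function.Exact d₁ π) :
    (∀ f : P₁ →ₗ[R] D, f ∘ₗ d₂ = 0 → ∃ g : P₀ →ₗ[R] D, g ∘ₗ d₁ = f) ↔
      ∀ f : ker π →ₗ[R] D, ∃ g : P₀ →ₗ[R] D, g ∘ₗ (ker π).subtype = f := by
  let d : P₁ →ₗ[R] ker π := d₁.codRestrict (ker π) fun x => h₁₀.apply_apply_eq_zero x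
  have hd : Function.Surjective d := fun ⟨y, hy⟩ =>
    let ⟨x, hx⟩ := (h₁₀ y).mp hy
    ⟨x, Subtype.ext hx⟩
  constructor
  · intro H f
    obtain ⟨g, hg⟩ := H (f ∘ₗ d) <| by
      ext x
      change f (d (d₂ x)) = 0
      rw [show d (d₂ x) = 0 from Subtype.ext (h₂₁.apply_apply_eq_zero x), map_zero]
    exact ⟨g, (cancel_right hd).mp hg⟩
  · intro H f hf
    obtain ⟨f', rfl⟩ := exists_comp_eq_of_surjective hd (f := f) fun x hx => by
      obtain ⟨y, rfl⟩ := (h₂₁ x).mp (congrArg Subtype.val hx)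
      exact LinearMap.congr_fun hf y
    obtain ⟨g, rfl⟩ := H f'
    exact ⟨g, rfl⟩

end Cocycles

section Resolution

variable {R : Type} [CommRing R] {A : Type} [AddCommGroup A] [Module R A]
  (P : ProjectiveResolution (ModuleCat.of R A))

namespace CategoryTheory.ProjectiveResolution

noncomputable def augmentation : P.complex.X 0 →ₗ[R] A := (P.π.f 0).hom

theorem augmentation_surjective : Function.Surjective P.augmentation :=
  (ModuleCat.epi_iff_surjective (P.π.f 0)).mp inferInstance

theorem exact_d_augmentation : Function.Exact (P.complex.d 1 0).hom P.augmentation :=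
  (ShortComplex.ShortExact.moduleCat_exact_iff_function_exact _).mp P.exact₀

theorem exact_d_d : Function.Exact (P.complex.d 2 1).hom (P.complex.d 1 0).hom :=
  (ShortComplex.ShortExact.moduleCat_exact_iff_function_exact _).mp (P.exact_succ 0)

end CategoryTheory.ProjectiveResolution

theorem subsingleton_extGroup_one_iff (D : Type) [AddCommGroup D] [Module R D] :
    Subsingleton (extGroup R A D 1) ↔
      ∀ f : P.complex.X 1 →ₗ[R] D, f ∘ₗ (P.complex.d 2 1).hom = 0 →
        ∃ g : P.complex.X 0 →ₗ[R] D, g ∘ₗ (P.complex.d 1 0).hom = f := by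
  let Q := P.complex.linearYonedaObj R (ModuleCat.of R D)
  rw [extGroup, ← ModuleCat.isZero_iff_subsingleton, (P.isoExt 1 _).isZero_iff,
    ← HomologicalComplex.exactAt_iff_isZero_homology, Q.exactAt_iff' 0 1 2 (by simp) (by simp),
    ShortComplex.moduleCat_exact_iff]
  constructor
  · intro H f hf
    obtain ⟨g, hg⟩ := H (ModuleCat.ofHom f) (ModuleCat.hom_ext hf)
    exact ⟨g.hom, congrArg ModuleCat.Hom.hom hg⟩
  · intro H f hf
    obtain ⟨g, hg⟩ := H f.hom (congrArg ModuleCat.Hom.hom hf)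
    exact ⟨ModuleCat.ofHom g, ModuleCat.hom_ext hg⟩

theorem subsingleton_extGroup_one_iff_forall_exists_comp_subtype_eq
    (D : Type) [AddCommGroup D] [Module R D] :
    Subsingleton (extGroup R A D 1) ↔
      ∀ f : ker P.augmentation →ₗ[R] D, ∃ g : P.complex.X 0 →ₗ[R] D,
        g ∘ₗ (ker P.augmentation).subtype = f :=
  (subsingleton_extGroup_one_iff P D).trans
    (forall_exists_comp_eq_iff_of_exact P.exact_d_d P.exact_d_augmentation)

end Resolution

/-- `Hom_R(M, C)` is an S-contramodule whenever `M` is S-torsion or `C` is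
an S-contramodule. -/
theorem hom_is_contramodule
    (R : Type) [CommRing R] (S : Submonoid R)
    (M C : Type) [AddCommGroup M] [Module R M] [AddCommGroup C] [Module R C] :
    ((∀ x : M, ∃ s : S, (s : R) • x = 0) → IsSContramodule R S (M →ₗ[R] C)) ∧
    (IsSContramodule R S C → IsSContramodule R S (M →ₗ[R] C)) := by
  obtain ⟨P⟩ := HasProjectiveResolution.out (Z := ModuleCat.of R (Localization S))
  simp only [IsSContramodule, subsingleton_extGroup_one_iff_forall_exists_comp_subtype_eq P]
  refine ⟨fun hM => ?_, fun ⟨hC₀, hC₁⟩ => ⟨fun φ => ?_, ?_⟩⟩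
  · have := TensorProduct.subsingleton_of_isTorsion' (L := Localization S) (fun x => hM x)
      Localization.exists_smul_eq
    exact ⟨eq_zero_of_subsingleton_tensor,
      exists_comp_subtype_eq_of_flat P.augmentation_surjective⟩
  · ext y m
    exact LinearMap.congr_fun (hC₀ (φ.flip m)) y
  · exact exists_comp_subtype_eq_of_forall_eq_zero P.augmentation_surjective hC₀ hC₁
end

section
/- Let R be a commutative ring and S ⊆ R a multiplicative subset such that the R-module S⁻¹R has projective dimension at most 1. Then the full subcategory of S-contramodule R-modules is closed under kernels, cokernels, extensions, and products in R-Mod; in particular it is an abelian category with exact inclusion into R-Mod. -/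
open CategoryTheory

/-- `M` has projective dimension at most 1 over `R`. -/
def HasProjDimLEOne (R : Type) [CommRing R] (M : Type) [AddCommGroup M] [Module R M] : Prop :=
  ∃ (ι : Type) (f : (ι →₀ R) →ₗ[R] M),
    Function.Surjective f ∧ Module.Projective R (LinearMap.ker f)
/-!
Choose a presentation `0 → K → F → S⁻¹R → 0` with `F` free and `K` projective. Then
`Hom(S⁻¹R, C) = 0` says that restriction `Hom(F, C) → Hom(K, C)` is injective, and computing
`Ext¹(S⁻¹R, C)` on the projective resolution `0 → K → F` shows that it vanishes iff that
restriction is surjective. So `C` is an S-contramodule iff `Hom(F, C) → Hom(K, C)` is bijective.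
Since `Hom(F, -)` and `Hom(K, -)` are exact, this class of modules is closed under kernels,
cokernels and extensions by the five lemma, and under products because `Hom` commutes with them.
-/

open Limits ZeroObject

namespace CategoryTheory.ShortComplex

variable {C : Type*} [Category C] [Abelian C] (S : ShortComplex C)

noncomputable def twoTermComplex : ChainComplex C ℕ :=
  ChainComplex.of
    (fun | 0 => S.X₂ | 1 => S.X₁ | _ + 2 => 0)
    (fun | 0 => S.f | _ + 1 => 0)
    (fun | 0 => zero_comp | _ + 1 => zero_comp)

lemma twoTermComplex_d_one_zero : S.twoTermComplex.d 1 0 = S.f := by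
  simp [twoTermComplex, ChainComplex.of.d]

lemma twoTermComplex_d_succ_succ (n : ℕ) : S.twoTermComplex.d (n + 2) (n + 1) = 0 := by
  simp [twoTermComplex, ChainComplex.of.d]; rfl

variable {S}

noncomputable def ShortExact.projectiveResolution (hS : S.ShortExact) [Projective S.X₁]
    [Projective S.X₂] : ProjectiveResolution S.X₃ where
  complex := S.twoTermComplex
  projective
    | 0 => inferInstanceAs (Projective S.X₂)
    | 1 => inferInstanceAs (Projective S.X₁)
    | _ + 2 => inferInstanceAs (Projective (0 : C))
  π := (ChainComplex.toSingle₀Equiv _ _).symm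
    ⟨S.g, by simp only [twoTermComplex_d_one_zero]; exact S.zero⟩
  quasiIso := ⟨fun n => by
    cases n with
    | zero =>
      rw [ChainComplex.quasiIsoAt₀_iff, ShortComplex.quasiIso_iff_of_zeros' _ rfl rfl rfl]
      refine (ShortComplex.exact_and_epi_g_iff_of_iso ?_).1 ⟨hS.exact, hS.epi_g⟩
      exact ShortComplex.isoMk (Iso.refl _) (Iso.refl _) (Iso.refl _)
        ((Category.id_comp _).trans (S.twoTermComplex_d_one_zero.trans (Category.comp_id _).symm))
        ((Category.id_comp _).trans ((ChainComplex.toSingle₀Equiv_symm_apply_f_zero _ _).trans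
          (Category.comp_id _).symm))
    | succ n =>
      rw [quasiIsoAt_iff_exactAt' _ _ (ChainComplex.exactAt_succ_single_obj _ _)]
      cases n with
      | zero =>
        rw [HomologicalComplex.exactAt_iff' _ 2 1 0 (by simp) (by simp),
          ShortComplex.exact_iff_mono _ (S.twoTermComplex_d_succ_succ 0)]
        change Mono (S.twoTermComplex.d 1 0)
        rw [twoTermComplex_d_one_zero]
        exact hS.mono_f
      | succ m =>
        rw [HomologicalComplex.exactAt_iff]
        exact ShortComplex.exact_of_isZero_X₂ _ (isZero_zero C)⟩

lemma ShortExact.subsingleton_ext_one_iff {R : Type*} [Ring R] [Linear R C] [EnoughProjectives C]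
    (hS : S.ShortExact) [Projective S.X₁] [Projective S.X₂] (Y : C) :
    Subsingleton (((Ext R C 1).obj (Opposite.op S.X₃)).obj Y) ↔
      ∀ g : S.X₁ ⟶ Y, ∃ h : S.X₂ ⟶ Y, S.f ≫ h = g := by
  let CC := hS.projectiveResolution.complex.linearYonedaObj R Y
  rw [← ModuleCat.isZero_iff_subsingleton, Iso.isZero_iff (hS.projectiveResolution.isoExt 1 Y),
    ← HomologicalComplex.exactAt_iff_isZero_homology,
    HomologicalComplex.exactAt_iff' CC 0 1 2 (by simp) (by simp),
    ShortComplex.moduleCat_exact_iff]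
  have hd : ∀ h : S.X₂ ⟶ Y, (CC.sc' 0 1 2).f h = S.f ≫ h := fun h => by
    change S.twoTermComplex.d 1 0 ≫ h = _
    exact congrArg (· ≫ h) S.twoTermComplex_d_one_zero
  refine ⟨fun hexact g => ?_, fun hext g _ => ?_⟩
  · obtain ⟨h, hh⟩ := hexact g ((isZero_zero C).eq_of_src _ _)
    exact ⟨h, (hd h).symm.trans hh⟩
  · obtain ⟨h, hh⟩ := hext g
    exact ⟨h, (hd h).trans hh⟩

end CategoryTheory.ShortComplex

namespace LinearMap

variable {R : Type*} [CommRing R] {P A B C : Type*} [AddCommMonoid P] [Module R P]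
  [AddCommGroup A] [Module R A] [AddCommGroup B] [Module R B] [AddCommGroup C] [Module R C]
  {f : A →ₗ[R] B} {g : B →ₗ[R] C}

lemma exact_compRight_of_exact_of_injective (hfg : Function.Exact f g) (hf : Function.Injective f) :
    Function.Exact (compRight R (M := P) f) (compRight R (M := P) g) := by
  intro h
  refine ⟨fun hgh => ?_, ?_⟩
  · have hmem : ∀ x, h x ∈ range f := fun x => (hfg (h x)).1 (LinearMap.congr_fun hgh x :)
    refine ⟨(LinearEquiv.ofInjective f hf).symm ∘ₗ h.codRestrict _ hmem, ext fun x => ?_⟩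
    simp
  · rintro ⟨k, rfl⟩
    ext x
    exact hfg.apply_apply_eq_zero (k x)

lemma exact_compRight_of_exact [Module.Projective R P] (hfg : Function.Exact f g) :
    Function.Exact (compRight R (M := P) f) (compRight R (M := P) g) := by
  intro h
  refine ⟨fun hgh => ?_, ?_⟩
  · have hmem : ∀ x, h x ∈ range f := fun x => (hfg (h x)).1 (LinearMap.congr_fun hgh x :)
    obtain ⟨k, hk⟩ := Module.projective_lifting_property f.rangeRestrict (h.codRestrict _ hmem)
      f.surjective_rangeRestrict
    exact ⟨k, ext fun x => congrArg Subtype.val (LinearMap.congr_fun hk x)⟩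
  · rintro ⟨k, rfl⟩
    ext x
    exact hfg.apply_apply_eq_zero (k x)

lemma injective_compRight_of_injective (hf : Function.Injective f) :
    Function.Injective (compRight R (M := P) f) :=
  hf.injective_linearMapComp_left

lemma surjective_compRight_of_surjective [Module.Projective R P] (hf : Function.Surjective f) :
    Function.Surjective (compRight R (M := P) f) :=
  fun h => Module.projective_lifting_property f h hf

lemma compRight_comp_lcomp {K : Type*} [AddCommMonoid K] [Module R K] (i : K →ₗ[R] P) :
    compRight R f ∘ₗ lcomp R A i = lcomp R B i ∘ₗ compRight R f :=
  rfl

end LinearMap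

section Orthogonal

open LinearMap

variable {R : Type*} [CommRing R] {K F : Type*} [AddCommMonoid K] [Module R K]
  [AddCommMonoid F] [Module R F] {i : K →ₗ[R] F}
  {C D : Type*} [AddCommGroup C] [Module R C] [AddCommGroup D] [Module R D]

lemma bijective_lcomp_ker (hC : Function.Bijective (lcomp R C i))
    (hD : Function.Injective (lcomp R D i)) (f : C →ₗ[R] D) :
    Function.Bijective (lcomp R (ker f) i) :=
  bijective_of_bijective_of_injective_of_left_exact _ _ _ _ _ _ _
    (compRight_comp_lcomp i) (compRight_comp_lcomp i)
    (exact_compRight_of_exact_of_injective (exact_subtype_ker_map f) (ker f).injective_subtype)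
    (exact_compRight_of_exact_of_injective (exact_subtype_ker_map f) (ker f).injective_subtype)
    hC hD (injective_compRight_of_injective (ker f).injective_subtype)
    (injective_compRight_of_injective (ker f).injective_subtype)

lemma bijective_lcomp_range_mkQ [Module.Projective R K] [Module.Projective R F]
    (hC : Function.Surjective (lcomp R C i)) (hD : Function.Bijective (lcomp R D i))
    (f : C →ₗ[R] D) :
    Function.Bijective (lcomp R (D ⧸ range f) i) :=
  bijective_of_surjective_of_bijective_of_right_exact _ _ _ _ _ _ _
    (compRight_comp_lcomp i) (compRight_comp_lcomp i)
    (exact_compRight_of_exact (exact_map_mkQ_range f))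
    (exact_compRight_of_exact (exact_map_mkQ_range f)) hC hD
    (surjective_compRight_of_surjective (range f).mkQ_surjective)
    (surjective_compRight_of_surjective (range f).mkQ_surjective)

lemma bijective_lcomp_of_exact [Module.Projective R K] [Module.Projective R F]
    {C' C'' : Type*} [AddCommGroup C'] [Module R C'] [AddCommGroup C''] [Module R C'']
    {j : C' →ₗ[R] C} {p : C →ₗ[R] C''} (hjp : Function.Exact j p) (hj : Function.Injective j)
    (hp : Function.Surjective p) (hC' : Function.Bijective (lcomp R C' i))
    (hC'' : Function.Bijective (lcomp R C'' i)) :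
    Function.Bijective (lcomp R C i) :=
  -- the five lemma, with the short exact rows padded by `PUnit` at both ends
  bijective_of_surjective_of_bijective_of_bijective_of_injective
    (0 : PUnit →ₗ[R] _) _ _ (0 : _ →ₗ[R] PUnit) (0 : PUnit →ₗ[R] _) _ _ (0 : _ →ₗ[R] PUnit)
    0 _ _ _ 0 (by simp) (compRight_comp_lcomp i) (compRight_comp_lcomp i) (by ext)
    ((exact_zero_iff_injective _ _).2 (injective_compRight_of_injective hj))
    (exact_compRight_of_exact hjp)
    ((exact_zero_iff_surjective _ _).2 (surjective_compRight_of_surjective hp))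
    ((exact_zero_iff_injective _ _).2 (injective_compRight_of_injective hj))
    (exact_compRight_of_exact hjp)
    ((exact_zero_iff_surjective _ _).2 (surjective_compRight_of_surjective hp))
    (fun _ => ⟨0, Subsingleton.elim _ _⟩) hC' hC'' (fun _ _ _ => Subsingleton.elim _ _)

lemma bijective_lcomp_pi {ι : Type*} {M : ι → Type*} [∀ k, AddCommGroup (M k)]
    [∀ k, Module R (M k)] (hM : ∀ k, Function.Bijective (lcomp R (M k) i)) :
    Function.Bijective (lcomp R (∀ k, M k) i) := by
  let eF := LinearEquiv.linearMapPi (R := R) (M₂ := F) (φ := M) R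
  let eK := LinearEquiv.linearMapPi (R := R) (M₂ := K) (φ := M) R
  have : ⇑(lcomp R (∀ k, M k) i) = eK ∘ Pi.map (fun k => lcomp R (M k) i) ∘ eF.symm := rfl
  rw [this]
  exact eK.bijective.comp ((Function.Bijective.piMap hM).comp eF.symm.bijective)

end Orthogonal

section Presentation

open LinearMap

variable {R : Type} [CommRing R] {K F L M : Type} [AddCommGroup K] [Module R K]
  [AddCommGroup F] [Module R F] [AddCommGroup L] [Module R L] [AddCommGroup M] [Module R M]
  {i : K →ₗ[R] F} {π : F →ₗ[R] L}

lemma forall_eq_zero_iff_injective_lcomp (hiπ : Function.Exact i π)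
    (hπ : Function.Surjective π) :
    (∀ f : L →ₗ[R] M, f = 0) ↔ Function.Injective (lcomp R M i) := by
  have hexact := exact_lcomp_of_exact_of_surjective M hiπ hπ
  rw [injective_iff_map_eq_zero]
  refine ⟨fun hL g hg => ?_, fun hK f => lcomp_injective_of_surjective (S := R) (N := M) π hπ ?_⟩
  · obtain ⟨f, rfl⟩ := (hexact g).1 hg
    rw [hL f, map_zero]
  · rw [map_zero]
    exact hK _ (hexact.apply_apply_eq_zero f)

lemma subsingleton_extGroup_one_iff_surjective_lcomp [Module.Projective R K]
    [Module.Projective R F] (hiπ : Function.Exact i π) (hi : Function.Injective i)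
    (hπ : Function.Surjective π) :
    Subsingleton (extGroup R L M 1) ↔ Function.Surjective (lcomp R M i) := by
  let S := ModuleCat.shortComplexOfCompEqZero i π hiπ.linearMap_comp_eq_zero
  have hS : S.ShortExact := ModuleCat.shortComplex_shortExact S hiπ hi hπ
  have : Projective S.X₁ := (IsProjective.iff_projective K).1 ‹_›
  have : Projective S.X₂ := (IsProjective.iff_projective F).1 ‹_›
  refine (hS.subsingleton_ext_one_iff (R := R) (ModuleCat.of R M)).trans
    ⟨fun hext g => ?_, fun hsurj g => ?_⟩
  · obtain ⟨h, hh⟩ := hext (ModuleCat.ofHom g)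
    exact ⟨h.hom, congrArg ModuleCat.Hom.hom hh⟩
  · obtain ⟨h, hh⟩ := hsurj g.hom
    exact ⟨ModuleCat.ofHom h, ModuleCat.hom_ext hh⟩

end Presentation

lemma isSContramodule_iff_bijective_lcomp {R : Type} [CommRing R] {S : Submonoid R}
    {K F : Type} [AddCommGroup K] [Module R K] [AddCommGroup F] [Module R F]
    [Module.Projective R K] [Module.Projective R F] {i : K →ₗ[R] F}
    {π : F →ₗ[R] Localization S} (hiπ : Function.Exact i π) (hi : Function.Injective i)
    (hπ : Function.Surjective π) (M : Type) [AddCommGroup M] [Module R M] :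
    IsSContramodule R S M ↔ Function.Bijective (LinearMap.lcomp R M i) :=
  and_congr (forall_eq_zero_iff_injective_lcomp hiπ hπ)
    (subsingleton_extGroup_one_iff_surjective_lcomp hiπ hi hπ)

/-- If `pd_R S⁻¹R ≤ 1` then the S-contramodule R-modules are closed under kernels,
cokernels, extensions, and products in `R`-Mod (hence form an abelian category with
exact inclusion). -/
theorem contramodule_category_closure
    (R : Type) [CommRing R] (S : Submonoid R)
    (hpd : HasProjDimLEOne R (Localization S)) :
    -- kernels
    (∀ (C D : Type) [AddCommGroup C] [Module R C] [AddCommGroup D] [Module R D],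
      IsSContramodule R S C → IsSContramodule R S D →
      ∀ f : C →ₗ[R] D, IsSContramodule R S (LinearMap.ker f)) ∧
    -- cokernels
    (∀ (C D : Type) [AddCommGroup C] [Module R C] [AddCommGroup D] [Module R D],
      IsSContramodule R S C → IsSContramodule R S D →
      ∀ f : C →ₗ[R] D, IsSContramodule R S (D ⧸ LinearMap.range f)) ∧
    -- extensions
    (∀ (C' C C'' : Type) [AddCommGroup C'] [Module R C'] [AddCommGroup C] [Module R C]
        [AddCommGroup C''] [Module R C'']
        (i : C' →ₗ[R] C) (p : C →ₗ[R] C''),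
      Function.Injective i → Function.Surjective p →
      LinearMap.range i = LinearMap.ker p →
      IsSContramodule R S C' → IsSContramodule R S C'' → IsSContramodule R S C) ∧
    -- products
    (∀ (ι : Type) (M : ι → Type) [∀ i, AddCommGroup (M i)] [∀ i, Module R (M i)],
      (∀ i, IsSContramodule R S (M i)) → IsSContramodule R S (∀ i, M i)) := by
  obtain ⟨ι, π, hπ, _⟩ := hpd
  have hcontra := isSContramodule_iff_bijective_lcomp (K := LinearMap.ker π)
    (LinearMap.exact_subtype_ker_map π)
    (LinearMap.ker π).injective_subtype hπ
  refine ⟨fun C D _ _ _ _ hC hD f => ?_, fun C D _ _ _ _ hC hD f => ?_,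
    fun C' C C'' _ _ _ _ _ _ j p hj hp hjp hC' hC'' => ?_, fun ι M _ _ hM => ?_⟩
  · rw [hcontra] at hC hD ⊢
    exact bijective_lcomp_ker hC hD.1 f
  · rw [hcontra] at hC hD ⊢
    exact bijective_lcomp_range_mkQ hC.2 hD f
  · rw [hcontra] at hC' hC'' ⊢
    exact bijective_lcomp_of_exact (LinearMap.exact_iff.2 hjp.symm) hj hp hC' hC''
  · simp only [hcontra] at hM ⊢
    exact bijective_lcomp_pi hM
end
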